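/- The linear map φ from the complex monoid algebra ℂIS_n to the groupoid convolution algebra B_n determined on basis elements by φ(s) = ∑_{t ≤ s} e_t (sum over all t ∈ IS_n with t ≤ s) is an isomorphism of unital ℂ-algebras, and its inverse is the linear map ψ determined by ψ(e_s) = ∑_{t ≤ s} μ(t,s)·t, where μ is the Möbius function of the poset (IS_n, ≤). -/

import Mathlib

/-- The monoid of partial functions on `{1,…,n}`, modeled as `Fin n → Option (Fin n)`,
under composition of partial functions (right to left). -/
abbrev PT (n : ℕ) := Fin n → Option (Fin n)

namespace PT

variable {n : ℕ}

/-- Composition of partial functions, right to left: `comp s t = s ∘ t`. -/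
def comp (s t : PT n) : PT n := fun x => (t x).bind s

/-- The domain of a partial function. -/
def dom (t : PT n) : Finset (Fin n) := Finset.univ.filter fun x => (t x).isSome

/-- The image (range) of a partial function. -/
def ran (t : PT n) : Finset (Fin n) := Finset.univ.filter fun y => ∃ x, t x = some y

/-- The identity partial function on the subset `X`. -/
def idOn (X : Finset (Fin n)) : PT n := fun x => if x ∈ X then some x else none

instance : Monoid (PT n) where
  mul := comp
  one := fun x => some x
  mul_assoc s t w := by
    funext x
    show (w x).bind (fun z => (t z).bind s) = ((w x).bind t).bind s
    exact (Option.bind_assoc (w x) t s).symm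
  one_mul t := by
    funext x
    show (t x).bind (fun y => some y) = t x
    cases t x <;> rfl
  mul_one t := by
    funext x
    show (some x).bind t = t x
    rfl

end PT

namespace PT

variable {n : ℕ}

/-- The natural partial order on partial functions: containment of graphs
(`s ≤ t` iff `dom s ⊆ dom t` and `t x = s x` for `x ∈ dom s`). -/
instance : PartialOrder (PT n) where
  le s t := ∀ x, s x ≠ none → s x = t x
  le_refl s := by intro x _; rfl
  le_trans s t u hst htu := by
    intro x hx
    rw [hst x hx]
    exact htu x (by rw [← hst x hx]; exact hx)
  le_antisymm s t hst hts := by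
    funext x
    by_cases hs : s x = none
    · by_cases ht : t x = none
      · rw [hs, ht]
      · rw [hts x ht] at ht; exact absurd hs ht
    · exact hst x hs

instance : LE (PT n) := @Preorder.toLE (PT n) (@PartialOrder.toPreorder (PT n) instPartialOrder)

instance : LT (PT n) := @Preorder.toLT (PT n) (@PartialOrder.toPreorder (PT n) instPartialOrder)

instance : DecidableRel (α := PT n) (· ≤ ·) := fun s t =>
  inferInstanceAs (Decidable (∀ x, s x ≠ none → s x = t x))

instance : DecidableRel (α := PT n) (· < ·) := fun s t =>
  decidable_of_iff (s ≤ t ∧ ¬ t ≤ s) lt_iff_le_not_ge.symm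

end PT

namespace PT

variable {n : ℕ}

/-- A partial function is injective (on its domain). -/
def Inj (t : PT n) : Prop := ∀ x y z, t x = some z → t y = some z → x = y

instance (t : PT n) : Decidable (Inj t) :=
  inferInstanceAs (Decidable (∀ x y z, t x = some z → t y = some z → x = y))

/-- The symmetric inverse monoid `IS_n` of injective partial functions on `{1,…,n}`,
as a submonoid of `PT_n`. -/
def ISsub (n : ℕ) : Submonoid (PT n) where
  carrier := {t | Inj t}
  one_mem' := by
    intro x y z hx hy
    exact (Option.some_injective _ hx).trans (Option.some_injective _ hy).symm
  mul_mem' := by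
    intro s t hs ht x y z hx hy
    have hx' : (t x).bind s = some z := hx
    have hy' : (t y).bind s = some z := hy
    rcases Option.bind_eq_some_iff.mp hx' with ⟨a, ha, hsa⟩
    rcases Option.bind_eq_some_iff.mp hy' with ⟨b, hb, hsb⟩
    have hab : a = b := hs a b z hsa hsb
    subst hab
    exact ht x y a ha hb

/-- `idOn X` is injective. -/
theorem inj_idOn (X : Finset (Fin n)) : Inj (idOn X) := by
  intro x y z hx hy
  unfold idOn at hx hy
  split at hx
  · split at hy
    · exact (Option.some_injective _ hx).trans (Option.some_injective _ hy).symm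
    · exact absurd hy (by simp)
  · exact absurd hx (by simp)

instance : DecidablePred (· ∈ ISsub n) := fun t => decidable_of_iff (Inj t) Iff.rfl

end PT

/-- The groupoid convolution algebra `B_n`: the vector space with basis
`{e_t : t ∈ IS_n}` and multiplication `e_s · e_t = e_{s ∘ t}` if `dom s = im t`,
else `0`. -/
noncomputable def ISAlg (n : ℕ) : Type := ↥(PT.ISsub n) →₀ ℂ

namespace ISAlg

variable {n : ℕ}

noncomputable instance : AddCommGroup (ISAlg n) :=
  inferInstanceAs (AddCommGroup (↥(PT.ISsub n) →₀ ℂ))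
noncomputable instance : Module ℂ (ISAlg n) :=
  inferInstanceAs (Module ℂ (↥(PT.ISsub n) →₀ ℂ))

/-- The coefficient of `t` in an element of `B_n`. -/
noncomputable def coeff (a : ISAlg n) : ↥(PT.ISsub n) → ℂ :=
  fun t => (show ↥(PT.ISsub n) →₀ ℂ from a) t

/-- The basis element `e_t` of `B_n`. -/
noncomputable def e (t : ↥(PT.ISsub n)) : ISAlg n :=
  show ↥(PT.ISsub n) →₀ ℂ from Finsupp.single t 1

/-- Convolution: `e_s · e_t = e_{s ∘ t}` if `dom s = im t`, and `0` otherwise. -/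
noncomputable instance : Mul (ISAlg n) :=
  ⟨fun a b =>
    show ↥(PT.ISsub n) →₀ ℂ from
      Finsupp.equivFunOnFinite.symm fun u =>
        ∑ p : ↥(PT.ISsub n) × ↥(PT.ISsub n),
          if PT.dom p.1.1 = PT.ran p.2.1 ∧ p.1 * p.2 = u then coeff a p.1 * coeff b p.2
          else 0⟩

/-- The multiplicative unit of `B_n` is `∑_{X ⊆ {1,…,n}} e_{id_X}`. -/
noncomputable instance : One (ISAlg n) :=
  ⟨∑ X : Finset (Fin n), e ⟨PT.idOn X, PT.inj_idOn X⟩⟩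

end ISAlg

/-! The key fact is unique factorization: if `u ≤ s * t` then `u = a * b` with `dom a = im b`,
`a ≤ s`, `b ≤ t` for exactly one pair, namely `b = t|dom u` and `a = s|im b`, and for no pair if
`u ≰ s * t` (composition is monotone). Counting these pairs gives `φ(s) φ(t) = φ(s t)`; the
elements below `1` are the `id_X`, so `φ(1) = 1`. Once `μ` is identified with the Möbius function
of the incidence algebra, the two Möbius identities `∑_{x ∈ [a,b]} μ(a,x) = δ_{ab} =
∑_{x ∈ [a,b]} μ(x,b)` show that `ψ` is a two-sided inverse of `φ`. -/

namespace IncidenceAlgebra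

open Finset

variable {𝕜 α : Type*}

lemma eq_mu_of_eq_neg_sum_Ico [AddCommGroup 𝕜] [One 𝕜] [PartialOrder α] [LocallyFiniteOrder α]
    [DecidableEq α] {f : α → α → 𝕜} (h_self : ∀ x, f x x = 1)
    (h_lt : ∀ x y, x < y → f x y = -∑ z ∈ Ico x y, f x z) {x y : α} (hxy : x ≤ y) :
    f x y = mu 𝕜 x y := by
  induction hk : #(Icc x y) using Nat.strong_induction_on generalizing y with
  | _ k ih =>
    obtain rfl | hlt := hxy.eq_or_lt
    · rw [h_self, mu_self]
    rw [h_lt x y hlt, mu_eq_neg_sum_Ico_of_ne hlt.ne]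
    refine congrArg Neg.neg (sum_congr rfl fun z hz => ?_)
    have hz := mem_Ico.mp hz
    exact ih _ (hk ▸ card_lt_card (Icc_ssubset_Icc_right hxy le_rfl hz.2)) hz.1 rfl

section Finite

variable [PartialOrder α] [Fintype α] [DecidableLE α] [LocallyFiniteOrder α] {M : Type*}

lemma sum_le_sum_le_eq_sum_sum_Icc [AddCommMonoid M] (F : α → α → M) (s : α) :
    ∑ t ∈ univ.filter (· ≤ s), ∑ u ∈ univ.filter (· ≤ t), F u t =
      ∑ u ∈ univ.filter (· ≤ s), ∑ t ∈ Icc u s, F u t :=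
  sum_comm' fun t u => by
    simp only [mem_filter, mem_univ, true_and, mem_Icc]
    exact ⟨fun h => ⟨⟨h.2, h.1⟩, h.2.trans h.1⟩, fun h => ⟨h.1.2, h.1.1⟩⟩

variable [Ring 𝕜] [DecidableEq α] [AddCommGroup M] [Module 𝕜 M]

lemma sum_le_mu_smul_sum_le (f : α → M) (s : α) :
    ∑ t ∈ univ.filter (· ≤ s), mu 𝕜 t s • ∑ u ∈ univ.filter (· ≤ t), f u = f s := by
  simp only [smul_sum]
  rw [sum_le_sum_le_eq_sum_sum_Icc (fun u t => mu 𝕜 t s • f u)]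
  simp [← sum_smul, sum_Icc_mu_left]

lemma sum_le_sum_le_mu_smul (f : α → M) (s : α) :
    ∑ t ∈ univ.filter (· ≤ s), ∑ u ∈ univ.filter (· ≤ t), mu 𝕜 u t • f u = f s := by
  rw [sum_le_sum_le_eq_sum_sum_Icc (fun u t => mu 𝕜 u t • f u)]
  simp [← sum_smul, sum_Icc_mu_right]

end Finite

end IncidenceAlgebra

namespace PT

open Finset

variable {n : ℕ}

lemma mul_apply (s t : PT n) (x : Fin n) : (s * t) x = (t x).bind s := rfl

lemma mem_dom {t : PT n} {x : Fin n} : x ∈ dom t ↔ t x ≠ none := by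
  simp [dom, Option.isSome_iff_ne_none]

lemma mem_ran {t : PT n} {y : Fin n} : y ∈ ran t ↔ ∃ x, t x = some y := by
  simp [ran]

lemma Inj.of_le {s t : PT n} (h : s ≤ t) (ht : Inj t) : Inj s := fun x y z hx hy =>
  ht x y z (by rwa [← h x (by simp [hx])]) (by rwa [← h y (by simp [hy])])

protected lemma mul_le_mul {a s b t : PT n} (ha : a ≤ s) (hb : b ≤ t) : a * b ≤ s * t := by
  intro x hx
  rw [mul_apply] at hx ⊢
  cases hbx : b x with
  | none => simp [hbx] at hx
  | some c =>
    rw [hbx] at hx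
    rw [mul_apply, ← hb x (by simp [hbx]), hbx]
    exact ha c hx

def restrict (t : PT n) (X : Finset (Fin n)) : PT n := fun x => if x ∈ X then t x else none

lemma restrict_le (t : PT n) (X : Finset (Fin n)) : t.restrict X ≤ t := by
  intro x hx
  by_cases h : x ∈ X <;> simp_all [restrict]

lemma dom_restrict_of_subset {t : PT n} {X : Finset (Fin n)} (h : X ⊆ dom t) :
    dom (t.restrict X) = X := by
  ext x
  by_cases hx : x ∈ X <;> simp [mem_dom, restrict, hx, mem_dom.mp (h _)]

lemma eq_restrict_dom_of_le {s t : PT n} (h : s ≤ t) : s = t.restrict (dom s) := by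
  funext x
  by_cases hx : s x = none
  · simp [restrict, mem_dom, hx]
  · simp [restrict, mem_dom, h x hx]

lemma dom_idOn (X : Finset (Fin n)) : dom (idOn X) = X :=
  dom_restrict_of_subset fun x _ => mem_dom.mpr (Option.some_ne_none x)

lemma le_one_iff_eq_idOn {t : PT n} : t ≤ 1 ↔ t = idOn (dom t) :=
  ⟨eq_restrict_dom_of_le, fun h => h ▸ restrict_le 1 _⟩

lemma dom_mul_of_dom_eq_ran {a b : PT n} (h : dom a = ran b) : dom (a * b) = dom b := by
  ext x
  rw [mem_dom, mem_dom, mul_apply]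
  cases hb : b x with
  | none => simp
  | some y => simpa [← mem_dom, h] using mem_ran.mpr ⟨x, hb⟩

lemma ran_restrict_dom_subset {s t u : PT n} (hu : u ≤ s * t) :
    ran (t.restrict (dom u)) ⊆ dom s := by
  intro y hy
  obtain ⟨x, hx⟩ := mem_ran.mp hy
  by_cases hxu : x ∈ dom u
  · have htx : t x = some y := by simpa [restrict, hxu] using hx
    have := hu x (mem_dom.mp hxu)
    rw [mem_dom, ← Option.bind_some y s, ← htx, ← mul_apply, ← this]
    exact mem_dom.mp hxu
  · simp [restrict, hxu] at hx

lemma restrict_ran_mul_restrict_dom {s t u : PT n} (hu : u ≤ s * t) :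
    s.restrict (ran (t.restrict (dom u))) * t.restrict (dom u) = u := by
  funext x
  by_cases hxu : x ∈ dom u
  · have := hu x (mem_dom.mp hxu)
    rw [this, mul_apply, mul_apply]
    cases htx : t x with
    | none => simp [restrict, hxu, htx]
    | some y =>
      have hy : y ∈ ran (t.restrict (dom u)) := mem_ran.mpr ⟨x, by simp [restrict, hxu, htx]⟩
      simp [restrict, hxu, htx, hy]
  · rw [mem_dom, not_not] at hxu
    simp [mul_apply, restrict, mem_dom, hxu]

-- If `u ≤ s * t`, the only such factorization is `b = t|dom u`, `a = s|im b`.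
lemma card_factorizations (s t u : ISsub n) :
    #{p : ISsub n × ISsub n |
        (dom p.1.1 = ran p.2.1 ∧ p.1 * p.2 = u) ∧ p.1 ≤ s ∧ p.2 ≤ t} =
      if u ≤ s * t then 1 else 0 := by
  split_ifs with hu
  · have hu' : u.1 ≤ s.1 * t.1 := hu
    set b : ISsub n := ⟨t.1.restrict (dom u.1), t.2.of_le (restrict_le _ _)⟩
    set a : ISsub n := ⟨s.1.restrict (ran b.1), s.2.of_le (restrict_le _ _)⟩
    rw [card_eq_one]
    refine ⟨(a, b), eq_singleton_iff_unique_mem.mpr ⟨?_, ?_⟩⟩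
    · simp only [mem_filter, mem_univ, true_and]
      exact ⟨⟨dom_restrict_of_subset (ran_restrict_dom_subset hu'),
        Subtype.ext (restrict_ran_mul_restrict_dom hu')⟩, restrict_le _ _, restrict_le _ _⟩
    · rintro ⟨a', b'⟩ hp
      simp only [mem_filter, mem_univ, true_and] at hp
      obtain ⟨⟨hdom, hmul⟩, ha, hb⟩ := hp
      have hb' : b' = b := Subtype.ext <| by
        rw [eq_restrict_dom_of_le hb, ← dom_mul_of_dom_eq_ran hdom]
        exact congrArg (fun v : ISsub n => t.1.restrict (dom v.1)) hmul
      subst hb'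
      have ha' := (eq_restrict_dom_of_le ha).trans (congrArg s.1.restrict hdom)
      exact Prod.ext (Subtype.ext ha') rfl
  · refine card_eq_zero.mpr (filter_eq_empty_iff.mpr ?_)
    rintro ⟨a, b⟩ - ⟨⟨-, hmul⟩, ha, hb⟩
    exact hu (hmul ▸ PT.mul_le_mul ha hb)

end PT

namespace ISAlg

open PT Finset

variable {n : ℕ}

lemma ext {a b : ISAlg n} (h : ∀ u, coeff a u = coeff b u) : a = b := Finsupp.ext h

lemma coeff_add (a b : ISAlg n) (u : ISsub n) : coeff (a + b) u = coeff a u + coeff b u := rfl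

lemma coeff_smul (c : ℂ) (a : ISAlg n) (u : ISsub n) : coeff (c • a) u = c * coeff a u := rfl

lemma coeff_sum {ι : Type*} (F : Finset ι) (f : ι → ISAlg n) (u : ISsub n) :
    coeff (∑ i ∈ F, f i) u = ∑ i ∈ F, coeff (f i) u :=
  Finsupp.finsetSum_apply F f u

lemma coeff_e (t u : ISsub n) : coeff (e t) u = if t = u then 1 else 0 := Finsupp.single_apply

lemma coeff_mul (a b : ISAlg n) (u : ISsub n) :
    coeff (a * b) u = ∑ p ∈ univ.filter (fun p : ISsub n × ISsub n =>
      dom p.1.1 = ran p.2.1 ∧ p.1 * p.2 = u), coeff a p.1 * coeff b p.2 :=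
  (sum_filter _ _).symm

protected lemma add_mul (a b c : ISAlg n) : (a + b) * c = a * c + b * c :=
  ext fun u => by simp only [coeff_mul, coeff_add, add_mul, sum_add_distrib]

protected lemma mul_add (a b c : ISAlg n) : a * (b + c) = a * b + a * c :=
  ext fun u => by simp only [coeff_mul, coeff_add, mul_add, sum_add_distrib]

protected lemma smul_mul (r : ℂ) (a b : ISAlg n) : (r • a) * b = r • (a * b) :=
  ext fun u => by simp only [coeff_mul, coeff_smul, mul_sum, mul_assoc]

protected lemma mul_smul (r : ℂ) (a b : ISAlg n) : a * (r • b) = r • (a * b) :=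
  ext fun u => by simp only [coeff_mul, coeff_smul, mul_sum, mul_left_comm]

noncomputable def mulₗ : ISAlg n →ₗ[ℂ] ISAlg n →ₗ[ℂ] ISAlg n :=
  LinearMap.mk₂ ℂ (· * ·) ISAlg.add_mul ISAlg.smul_mul ISAlg.mul_add ISAlg.mul_smul

noncomputable def basis : Module.Basis (ISsub n) ℂ (ISAlg n) := Finsupp.basisSingleOne

/-- `φ(s)`, the image of `s ∈ IS_n` in `B_n`. -/
noncomputable def lowerSum (s : ISsub n) : ISAlg n := ∑ t ∈ univ.filter (· ≤ s), e t

lemma coeff_lowerSum (s u : ISsub n) : coeff (lowerSum s) u = if u ≤ s then 1 else 0 := by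
  simp [lowerSum, coeff_sum, coeff_e]

lemma lowerSum_mul_lowerSum (s t : ISsub n) : lowerSum s * lowerSum t = lowerSum (s * t) :=
  ext fun u => by
    simp only [coeff_mul, coeff_lowerSum, ite_zero_mul_ite_zero, one_mul, sum_boole,
      filter_filter, card_factorizations, Nat.cast_ite, Nat.cast_one, Nat.cast_zero]

lemma lowerSum_one : lowerSum (1 : ISsub n) = 1 := by
  refine sum_nbij' (fun t => dom t.1) (fun X => ⟨idOn X, inj_idOn X⟩) (by simp)
    (fun X _ => ?_) (fun t ht => ?_) (fun X _ => ?_) (fun t ht => ?_)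
  · exact mem_filter.mpr ⟨mem_univ _, le_one_iff_eq_idOn.mpr (by rw [dom_idOn])⟩
  · exact Subtype.ext (le_one_iff_eq_idOn.mp (mem_filter.mp ht).2).symm
  · simp [dom_idOn]
  · exact congrArg e (Subtype.ext (le_one_iff_eq_idOn.mp (mem_filter.mp ht).2))

lemma map_mul_of_map_single_eq_lowerSum (φ : MonoidAlgebra ℂ (ISsub n) →ₗ[ℂ] ISAlg n)
    (hφ : ∀ s, φ (MonoidAlgebra.single s 1) = lowerSum s) (a b : MonoidAlgebra ℂ (ISsub n)) :
    φ (a * b) = φ a * φ b := by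
  have : (LinearMap.mul ℂ _).compr₂ φ = mulₗ.compl₁₂ φ φ :=
    (MonoidAlgebra.basis _ ℂ).ext fun s => (MonoidAlgebra.basis _ ℂ).ext fun t => by
      simp [mulₗ, hφ, MonoidAlgebra.single_mul_single, lowerSum_mul_lowerSum]
  exact LinearMap.congr_fun₂ this a b

end ISAlg

open PT ISAlg in
/-- The linear map `φ : ℂIS_n → B_n` determined by
`φ(s) = ∑_{t ≤ s} e_t` is an isomorphism of unital `ℂ`-algebras (it is bijective,
multiplicative and unital), and its inverse is the linear map `ψ` determined by
`ψ(e_s) = ∑_{t ≤ s} μ(t,s)·t`, where `μ` is the Möbius function of the poset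
`(IS_n, ≤)`. -/
theorem monoidAlgebra_IS_iso_groupoidAlgebra (n : ℕ)
    (φ : MonoidAlgebra ℂ ↥(ISsub n) →ₗ[ℂ] ISAlg n)
    (hφ : ∀ s : ↥(ISsub n),
      φ (MonoidAlgebra.single s 1) = ∑ t ∈ Finset.univ.filter (· ≤ s), e t)
    (μ : ↥(ISsub n) → ↥(ISsub n) → ℂ)
    (hμ_refl : ∀ x : ↥(ISsub n), μ x x = 1)
    (hμ_rec : ∀ x y : ↥(ISsub n), x < y →
      μ x y = -∑ z ∈ Finset.univ.filter (fun z => x ≤ z ∧ z < y), μ x z)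
    (ψ : ISAlg n →ₗ[ℂ] MonoidAlgebra ℂ ↥(ISsub n))
    (hψ : ∀ s : ↥(ISsub n),
      ψ (e s) = ∑ t ∈ Finset.univ.filter (· ≤ s), μ t s • MonoidAlgebra.single t 1) :
    Function.Bijective φ ∧
    (∀ a b : MonoidAlgebra ℂ ↥(ISsub n), φ (a * b) = φ a * φ b) ∧
    φ 1 = 1 ∧
    (∀ x : MonoidAlgebra ℂ ↥(ISsub n), ψ (φ x) = x) ∧
    (∀ y : ISAlg n, φ (ψ y) = y) := by
  let _ : LocallyFiniteOrder (ISsub n) := Fintype.toLocallyFiniteOrder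
  have hμ_eq_mu : ∀ t s, t ≤ s → μ t s = IncidenceAlgebra.mu ℂ t s := fun t s =>
    IncidenceAlgebra.eq_mu_of_eq_neg_sum_Ico hμ_refl fun x y hxy => by
      rw [hμ_rec x y hxy]
      congr 2
      ext z
      simp
  have hψ_mu : ∀ s, ψ (e s) =
      ∑ t ∈ Finset.univ.filter (· ≤ s), IncidenceAlgebra.mu ℂ t s • MonoidAlgebra.single t 1 :=
    fun s => (hψ s).trans <| Finset.sum_congr rfl fun t ht => by
      rw [hμ_eq_mu t s (Finset.mem_filter.mp ht).2]
  have hψφ : ψ ∘ₗ φ = LinearMap.id := (MonoidAlgebra.basis _ ℂ).ext fun s => by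
    show ψ (φ (MonoidAlgebra.single s 1)) = MonoidAlgebra.single s 1
    simp only [hφ, map_sum, hψ_mu]
    exact IncidenceAlgebra.sum_le_sum_le_mu_smul _ s
  have hφψ : φ ∘ₗ ψ = LinearMap.id := ISAlg.basis.ext fun s => by
    show φ (ψ (e s)) = e s
    simp only [hψ_mu, map_sum, map_smul, hφ]
    exact IncidenceAlgebra.sum_le_mu_smul_sum_le e s
  refine ⟨Function.bijective_iff_has_inverse.mpr
      ⟨ψ, LinearMap.congr_fun hψφ, LinearMap.congr_fun hφψ⟩,
    map_mul_of_map_single_eq_lowerSum φ hφ, ?_, LinearMap.congr_fun hψφ, LinearMap.congr_fun hφψ⟩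
  rw [MonoidAlgebra.one_def, hφ]
  exact lowerSum_one
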